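/- Let H be a separable Hilbert space, μ a Borel probability measure on H (the prior), G : H → ℝ^m continuous, Σ ∈ ℝ^{m×m} symmetric positive definite, and ρ_Σ the density of N(0, Σ) on ℝ^m. Define, for y ∈ ℝ^m, the posterior μ^y by dμ^y/dμ (ξ) = ρ_Σ(y − G(ξ)) / Z(y) with Z(y) = ∫_H ρ_Σ(y − G(ξ)) dμ(ξ). Then 0 < Z(y) < ∞ for every y, so μ^y is a well-defined probability measure, and y ↦ μ^y is continuous in total variation: if y_n → y in ℝ^m then sup over Borel sets A of |μ^{y_n}(A) − μ^y(A)| → 0. -/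

import Mathlib

open MeasureTheory Matrix Filter

/-- Let `H` be a separable Hilbert space, `μ` a Borel probability
measure on `H` (the prior), `G : H → ℝ^m` continuous, `Σ` symmetric positive
definite, and `ρ_Σ` the density of `N(0,Σ)`.  Define the posterior `μ^y` by
`dμ^y/dμ (ξ) = ρ_Σ(y − G(ξ))/Z(y)` with `Z(y) = ∫ ρ_Σ(y − G(ξ)) dμ(ξ)`.  Then
`0 < Z(y) < ∞` for every `y`, `μ^y` is a probability measure, and `y ↦ μ^y` is
continuous in total variation. -/
theorem bayes_posterior_wellposed
    {H : Type*} [NormedAddCommGroup H] [InnerProductSpace ℝ H] [CompleteSpace H]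
    [SecondCountableTopology H] [MeasurableSpace H] [BorelSpace H]
    (μ : Measure H) [IsProbabilityMeasure μ]
    (m : ℕ) (G : H → (Fin m → ℝ)) (hG : Continuous G)
    (S : Matrix (Fin m) (Fin m) ℝ) (hS : S.PosDef)
    (ρ : (Fin m → ℝ) → ℝ)
    (hρ : ∀ e, ρ e = (2 * Real.pi) ^ (-(m : ℝ) / 2) * S.det ^ (-(1 : ℝ) / 2) *
      Real.exp (-(1 / 2) * (e ⬝ᵥ (S⁻¹ *ᵥ e))))
    (Z : (Fin m → ℝ) → ℝ) (hZ : ∀ y, Z y = ∫ ξ, ρ (y - G ξ) ∂μ)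
    (post : (Fin m → ℝ) → Measure H)
    (hpost : ∀ y, post y =
      μ.withDensity (fun ξ => ENNReal.ofReal (ρ (y - G ξ) / Z y))) :
    (∀ y, Integrable (fun ξ => ρ (y - G ξ)) μ) ∧
    (∀ y, 0 < Z y) ∧
    (∀ y, IsProbabilityMeasure (post y)) ∧
    (∀ (y : Fin m → ℝ) (yn : ℕ → Fin m → ℝ), Tendsto yn atTop (nhds y) →
      Tendsto (fun n => ⨆ (A : Set H) (_ : MeasurableSet A),
        |((post (yn n)) A).toReal - ((post y) A).toReal|) atTop (nhds 0)) := by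
  set c : ℝ := (2 * Real.pi) ^ (-(m : ℝ) / 2) * S.det ^ (-(1 : ℝ) / 2) with hc_def
  have hπ : (0 : ℝ) < 2 * Real.pi := by positivity
  have hdet : 0 < S.det := hS.det_pos
  have hc : 0 < c := by
    apply mul_pos <;> exact Real.rpow_pos_of_pos (by assumption) _
  have hquad : ∀ e : Fin m → ℝ, 0 ≤ e ⬝ᵥ (S⁻¹ *ᵥ e) := fun e => by
    simpa using (hS.inv.posSemidef).dotProduct_mulVec_nonneg e
  have hρpos : ∀ e, 0 < ρ e := fun e => by
    rw [hρ e]; exact mul_pos hc (Real.exp_pos _)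
  have hρle : ∀ e, ρ e ≤ c := fun e => by
    rw [hρ e]
    nth_rewrite 2 [show c = c * 1 by ring]
    apply mul_le_mul_of_nonneg_left _ hc.le
    rw [Real.exp_le_one_iff]
    nlinarith [hquad e]
  have hρcont : Continuous ρ := by
    have : Continuous fun e : Fin m → ℝ => e ⬝ᵥ (S⁻¹ *ᵥ e) :=
      continuous_id.dotProduct (continuous_const.matrix_mulVec continuous_id)
    have h2 : Continuous fun e : Fin m → ℝ =>
        c * Real.exp (-(1 / 2) * (e ⬝ᵥ (S⁻¹ *ᵥ e))) :=
      continuous_const.mul ((continuous_const.mul this).rexp)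
    convert h2 using 1
    ext e; exact hρ e
  have hfcont : ∀ y : Fin m → ℝ, Continuous fun ξ => ρ (y - G ξ) := fun y =>
    hρcont.comp (continuous_const.sub hG)
  have hfmeas : ∀ y : Fin m → ℝ, AEStronglyMeasurable (fun ξ => ρ (y - G ξ)) μ :=
    fun y => (hfcont y).aestronglyMeasurable
  have hint : ∀ y, Integrable (fun ξ => ρ (y - G ξ)) μ := fun y => by
    refine Integrable.mono' (integrable_const c) (hfmeas y) (ae_of_all _ fun ξ => ?_)
    rw [Real.norm_eq_abs, abs_of_pos (hρpos _)]
    exact hρle _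
  have hZpos : ∀ y, 0 < Z y := fun y => by
    rw [hZ y]
    rw [integral_pos_iff_support_of_nonneg (fun ξ => (hρpos _).le) (hint y)]
    have : (Function.support fun ξ => ρ (y - G ξ)) = Set.univ := by
      ext ξ; simp [Function.mem_support, (hρpos (y - G ξ)).ne']
    rw [this]; simp
  -- integral formula for the posterior measure of a measurable set
  have hintdiv : ∀ y, Integrable (fun ξ => ρ (y - G ξ) / Z y) μ :=
    fun y => (hint y).div_const _
  have hmd : ∀ y, AEStronglyMeasurable (fun ξ => ρ (y - G ξ) / Z y) μ :=
    fun y => (hintdiv y).aestronglyMeasurable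
  have key : ∀ (y : Fin m → ℝ) (A : Set H), MeasurableSet A →
      ((post y) A).toReal = ∫ ξ in A, ρ (y - G ξ) / Z y ∂μ := by
    intro y A hA
    rw [hpost, withDensity_apply _ hA,
      integral_eq_lintegral_of_nonneg_ae
        (ae_of_all _ fun ξ => div_nonneg (hρpos _).le (hZpos y).le)
        ((hmd y).restrict)]
  have hprob : ∀ y, IsProbabilityMeasure (post y) := by
    intro y
    constructor
    have h1 : ((post y) Set.univ).toReal = 1 := by
      rw [key y Set.univ MeasurableSet.univ, Measure.restrict_univ, integral_div, ← hZ y,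
        div_self (hZpos y).ne']
    have hfin : (post y) Set.univ ≠ ⊤ := by
      rw [hpost, withDensity_apply _ MeasurableSet.univ, Measure.restrict_univ]
      rw [← ofReal_integral_eq_lintegral_ofReal (hintdiv y)
        (ae_of_all _ fun ξ => div_nonneg (hρpos _).le (hZpos y).le)]
      exact ENNReal.ofReal_ne_top
    rw [← ENNReal.ofReal_toReal hfin, h1]; simp
  refine ⟨hint, hZpos, hprob, ?_⟩
  intro y yn hyn
  -- pointwise convergence of the likelihood
  have hptρ : ∀ ξ : H, Tendsto (fun n => ρ (yn n - G ξ)) atTop (nhds (ρ (y - G ξ))) := by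
    intro ξ
    exact ((hρcont.comp (continuous_id.sub continuous_const)).tendsto y).comp hyn
  -- Z (yn n) → Z y
  have hZn : Tendsto (fun n => Z (yn n)) atTop (nhds (Z y)) := by
    simp only [hZ]
    refine tendsto_integral_filter_of_dominated_convergence (fun _ => c)
      (Eventually.of_forall fun n => hfmeas _)
      (Eventually.of_forall fun n => ae_of_all _ fun ξ => ?_)
      (integrable_const c) (ae_of_all _ fun ξ => hptρ ξ)
    rw [Real.norm_eq_abs, abs_of_pos (hρpos _)]
    exact hρle _
  set f : ℕ → H → ℝ := fun n ξ => ρ (yn n - G ξ) / Z (yn n) with hf_def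
  set g : H → ℝ := fun ξ => ρ (y - G ξ) / Z y with hg_def
  -- pointwise convergence of the posterior densities
  have hpt : ∀ ξ, Tendsto (fun n => f n ξ) atTop (nhds (g ξ)) := fun ξ =>
    (hptρ ξ).div hZn (hZpos y).ne'
  -- eventually Z (yn n) > Z y / 2
  have hev : ∀ᶠ n in atTop, Z y / 2 < Z (yn n) :=
    hZn.eventually (eventually_gt_nhds (by linarith [hZpos y]))
  -- L¹ convergence of densities
  have hD : Tendsto (fun n => ∫ ξ, |f n ξ - g ξ| ∂μ) atTop (nhds 0) := by
    have h0 : (0 : ℝ) = ∫ _ : H, (0 : ℝ) ∂μ := by simp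
    rw [h0]
    refine tendsto_integral_filter_of_dominated_convergence
      (fun _ => c / (Z y / 2) + c / Z y)
      (Eventually.of_forall fun n => by
        simpa [Real.norm_eq_abs] using (((hmd _).sub (hmd y)).norm))
      ?_ (integrable_const _) (ae_of_all _ fun ξ => ?_)
    · filter_upwards [hev] with n hn
      refine ae_of_all _ fun ξ => ?_
      rw [Real.norm_eq_abs, abs_abs]
      have h1 : |f n ξ| ≤ c / (Z y / 2) := by
        rw [hf_def, abs_of_nonneg (div_nonneg (hρpos _).le (hZpos _).le)]
        exact div_le_div₀ hc.le (hρle _) (by linarith [hZpos y]) hn.le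
      have h2 : |g ξ| ≤ c / Z y := by
        rw [hg_def, abs_of_nonneg (div_nonneg (hρpos _).le (hZpos _).le)]
        exact div_le_div₀ hc.le (hρle _) (hZpos y) le_rfl
      calc |f n ξ - g ξ| ≤ |f n ξ| + |g ξ| := abs_sub _ _
        _ ≤ c / (Z y / 2) + c / Z y := add_le_add h1 h2
    · have h : Tendsto (fun n => f n ξ - g ξ) atTop (nhds (g ξ - g ξ)) :=
        (hpt ξ).sub (tendsto_const_nhds (x := g ξ))
      have h2 := h.abs
      simpa using h2
  -- squeeze
  have hsup_le : ∀ n, (⨆ (A : Set H) (_ : MeasurableSet A),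
      |((post (yn n)) A).toReal - ((post y) A).toReal|) ≤ ∫ ξ, |f n ξ - g ξ| ∂μ := by
    intro n
    have hDnn : 0 ≤ ∫ ξ, |f n ξ - g ξ| ∂μ := integral_nonneg fun ξ => abs_nonneg _
    refine Real.iSup_le (fun A => Real.iSup_le (fun hA => ?_) hDnn) hDnn
    rw [key _ A hA, key _ A hA]
    have hi1 : Integrable (f n) (μ.restrict A) := (hintdiv (yn n)).restrict
    have hi2 : Integrable g (μ.restrict A) := (hintdiv y).restrict
    calc |∫ ξ in A, f n ξ ∂μ - ∫ ξ in A, g ξ ∂μ|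
        = |∫ ξ in A, (f n ξ - g ξ) ∂μ| := by rw [integral_sub hi1 hi2]
      _ ≤ ∫ ξ in A, |f n ξ - g ξ| ∂μ := by
          simpa [Real.norm_eq_abs] using
            norm_integral_le_integral_norm (μ := μ.restrict A) (fun ξ => f n ξ - g ξ)
      _ ≤ ∫ ξ, |f n ξ - g ξ| ∂μ :=
          setIntegral_le_integral (((hintdiv (yn n)).sub (hintdiv y)).abs)
            (ae_of_all _ fun ξ => abs_nonneg _)
  have hsup_nn : ∀ n, 0 ≤ ⨆ (A : Set H) (_ : MeasurableSet A),
      |((post (yn n)) A).toReal - ((post y) A).toReal| := fun n =>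
    Real.iSup_nonneg fun A => Real.iSup_nonneg fun _ => abs_nonneg _
  exact squeeze_zero hsup_nn hsup_le hD
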